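/- Let α and α' be equivalent partial actions of a unital inverse semigroup S on algebras A and A' respectively, with all domain ideals unital. Then the associated partial representations π_α : s ↦ 1_s δ_s and π_{α'} : s ↦ 1'_s δ_s are equivalent, i.e. there is an algebra isomorphism φ : A ⋊_α S → A' ⋊_{α'} S with π_{α'}(s) = φ(π_α(s)) for all s ∈ S. -/
import Mathlib


open Finsupp

noncomputable section

/-- The natural partial order on an inverse semigroup: `r ≤ t` iff `r = t r* r`. -/
def sle {S : Type*} [Mul S] [Star S] (r t : S) : Prop := r = t * (star r * r)

/-- A partial action of a unital inverse semigroup `S` on an associative algebra `A`: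
ideals `X s` and isomorphisms `act s : X (star s) → X s`. -/
structure PartialAction (S : Type*) [Monoid S] [StarMul S]
    (A : Type*) [NonUnitalRing A] where
  X : S → Set A
  zero_mem : ∀ s, (0 : A) ∈ X s
  add_mem : ∀ s {a b : A}, a ∈ X s → b ∈ X s → a + b ∈ X s
  neg_mem : ∀ s {a : A}, a ∈ X s → -a ∈ X s
  mul_mem_left : ∀ s (a : A) {b : A}, b ∈ X s → a * b ∈ X s
  mul_mem_right : ∀ s (a : A) {b : A}, b ∈ X s → b * a ∈ X s
  act : S → A → A
  X_one : X 1 = Set.univ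
  act_one : ∀ a : A, act 1 a = a
  act_add : ∀ s {a b : A}, a ∈ X (star s) → b ∈ X (star s) →
    act s (a + b) = act s a + act s b
  act_mul : ∀ s {a b : A}, a ∈ X (star s) → b ∈ X (star s) →
    act s (a * b) = act s a * act s b
  mem_act : ∀ s {a : A}, a ∈ X (star s) → act s a ∈ X s
  act_act : ∀ s {a : A}, a ∈ X (star s) → act (star s) (act s a) = a
  range_eq : ∀ s t, act s '' (X (star s) ∩ X t) = X s ∩ X (s * t)
  comp : ∀ s t {a : A}, a ∈ X (star t) → act t a ∈ X t ∩ X (star s) →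
    act s (act t a) = act (s * t) a

namespace PartialAction

variable {S : Type*} [Monoid S] [StarMul S] {A : Type*} [NonUnitalRing A]
variable (P : PartialAction S A)

theorem mul_term_mem (s t : S) {a b : A} (ha : a ∈ P.X s) (hb : b ∈ P.X t) :
    P.act s (P.act (star s) a * b) ∈ P.X (s * t) := by
  have h1 : a ∈ P.X (star (star s)) := by rwa [star_star]
  have h2 := P.mem_act (star s) h1
  have h3 : P.act (star s) a * b ∈ P.X (star s) ∩ P.X t :=
    ⟨P.mul_mem_right _ b h2, P.mul_mem_left t _ hb⟩
  have h4 := Set.mem_image_of_mem (P.act s) h3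
  rw [P.range_eq s t] at h4
  exact h4.2

theorem sum_mem {ι : Type*} (u : S) (tt : Finset ι) (F : ι → A)
    (h : ∀ i ∈ tt, F i ∈ P.X u) : (∑ i ∈ tt, F i) ∈ P.X u :=
  Finset.sum_induction F (· ∈ P.X u) (fun _ _ ha hb => P.add_mem u ha hb)
    (P.zero_mem u) h

/-- The algebra `L` of formal sums `Σ a_s δ_s` with `a_s ∈ X s`. -/
def L : Type _ := {f : S →₀ A // ∀ u, f u ∈ P.X u}

instance : Zero P.L := ⟨⟨0, fun u => by simpa using P.zero_mem u⟩⟩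

instance : Add P.L :=
  ⟨fun f g => ⟨f.1 + g.1, fun u => by
    rw [Finsupp.add_apply]; exact P.add_mem u (f.2 u) (g.2 u)⟩⟩

instance : Mul P.L :=
  ⟨fun f g =>
    ⟨f.1.sum fun s a => g.1.sum fun t b =>
        Finsupp.single (s * t) (P.act s (P.act (star s) a * b)), by
      intro u
      classical
      rw [Finsupp.sum_apply]
      refine P.sum_mem u _ _ fun s hs => ?_
      dsimp only
      rw [Finsupp.sum_apply]
      refine P.sum_mem u _ _ fun t ht => ?_
      dsimp only
      rw [Finsupp.single_apply]
      split_ifs with h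
      · exact h ▸ P.mul_term_mem s t (f.2 s) (g.2 t)
      · exact P.zero_mem u⟩⟩

/-- `a δ_r` as an element of `L`. -/
def del (r : S) (a : A) (h : a ∈ P.X r) : P.L :=
  ⟨Finsupp.single r a, fun u => by
    classical
    rw [Finsupp.single_apply]
    split_ifs with hh
    · exact hh ▸ h
    · exact P.zero_mem u⟩

/-- The relation generating the ideal `I`: `a δ_r ~ a δ_t` whenever `r ≤ t`, `a ∈ X r`. -/
def crel : P.L → P.L → Prop := fun x y =>
  ∃ (r t : S) (a : A) (h : a ∈ P.X r) (h' : a ∈ P.X t),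
    sle r t ∧ x = P.del r a h ∧ y = P.del t a h'

/-- The algebraic crossed product `A ⋊_α S = L / I`. -/
abbrev CP : Type _ := (ringConGen P.crel).Quotient

/-- The quotient map `L → A ⋊_α S`. -/
def toCP : P.L → P.CP := fun x => (x : P.CP)

/-- The partial representation `s ↦ 1_s δ_s`, given identities `one s` for the ideals. -/
def rep (one : S → A) (hmem : ∀ s, one s ∈ P.X s) : S → P.CP :=
  fun s => P.toCP (P.del s (one s) (hmem s))

end PartialAction

section Aux

open Finsupp

variable {S : Type*} [Monoid S] [StarMul S]
variable {A : Type*} [NonUnitalRing A] {A' : Type*} [NonUnitalRing A']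

namespace PartialAction

theorem act_zero' (P : PartialAction S A) (s : S) : P.act s 0 = 0 := by
  have h := P.act_add s (P.zero_mem (star s)) (P.zero_mem (star s))
  rw [add_zero] at h
  exact (add_eq_left.mp h.symm)

variable (P : PartialAction S A) (P' : PartialAction S A')
variable (θ : A ≃+* A') (hθX : ∀ s, θ '' P.X s = P'.X s)

/-- The map on `L` induced by `θ`. -/
def mapL : P.L → P'.L := fun f =>
  ⟨f.1.mapRange θ θ.map_zero, fun u => by
    rw [Finsupp.mapRange_apply]
    rw [← hθX u]
    exact ⟨f.1 u, f.2 u, rfl⟩⟩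

theorem mapL_add (f g : P.L) :
    P.mapL P' θ hθX (f + g) = P.mapL P' θ hθX f + P.mapL P' θ hθX g := by
  apply Subtype.ext
  show Finsupp.mapRange θ θ.map_zero (f.1 + g.1) = _
  exact Finsupp.mapRange_add θ.map_add f.1 g.1

theorem mapL_mul
    (hθact : ∀ s, ∀ a ∈ P.X (star s), θ (P.act s a) = P'.act s (θ a)) (f g : P.L) :
    P.mapL P' θ hθX (f * g) = P.mapL P' θ hθX f * P.mapL P' θ hθX g := by
  apply Subtype.ext
  show Finsupp.mapRange θ θ.map_zero (f.1.sum fun s a => g.1.sum fun t b =>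
        Finsupp.single (s * t) (P.act s (P.act (star s) a * b)))
    = (f.1.mapRange θ θ.map_zero).sum fun s a => (g.1.mapRange θ θ.map_zero).sum fun t b =>
        Finsupp.single (s * t) (P'.act s (P'.act (star s) a * b))
  simp only [Finsupp.sum, Finsupp.mapRange_apply,
    Finsupp.support_mapRange_of_injective _ _ θ.injective]
  rw [Finsupp.mapRange_finset_sum]
  refine Finset.sum_congr rfl fun s hs => ?_
  rw [Finsupp.mapRange_finset_sum]
  refine Finset.sum_congr rfl fun t ht => ?_
  rw [Finsupp.mapRange_single]
  congr 1
  have h2 : f.1 s ∈ P.X (star (star s)) := by rw [star_star]; exact f.2 s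
  have h1 : P.act (star s) (f.1 s) * g.1 t ∈ P.X (star s) :=
    P.mul_mem_right (star s) (g.1 t) (P.mem_act (star s) h2)
  rw [hθact s _ h1, map_mul, hθact (star s) (f.1 s) h2]

theorem mapL_del (r : S) (a : A) (h : a ∈ P.X r) :
    P.mapL P' θ hθX (P.del r a h) =
      P'.del r (θ a) (by rw [← hθX r]; exact ⟨a, h, rfl⟩) := by
  apply Subtype.ext
  show Finsupp.mapRange θ θ.map_zero (Finsupp.single r a) = Finsupp.single r (θ a)
  exact Finsupp.mapRange_single


theorem mapL_rel {B : Type*} {B' : Type*} [NonUnitalRing B] [NonUnitalRing B']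
    (Q : PartialAction S B) (Q' : PartialAction S B') (σ : B ≃+* B')
    (hσX : ∀ s, ⇑σ '' Q.X s = Q'.X s)
    (hσact : ∀ s, ∀ a ∈ Q.X (star s), σ (Q.act s a) = Q'.act s (σ a))
    (x y : Q.L) (h : (ringConGen Q.crel) x y) :
    (ringConGen Q'.crel) (Q.mapL Q' σ hσX x) (Q.mapL Q' σ hσX y) := by
  induction h with
  | of x y hxy =>
    obtain ⟨r, t, a, h, h', hs, hx, hy⟩ := hxy
    refine RingConGen.Rel.of _ _ ⟨r, t, σ a,
      (by rw [← hσX r]; exact ⟨a, h, rfl⟩),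
      (by rw [← hσX t]; exact ⟨a, h', rfl⟩), hs, ?_, ?_⟩
    · rw [hx]; exact Q.mapL_del Q' σ hσX r a h
    · rw [hy]; exact Q.mapL_del Q' σ hσX t a h'
  | refl x => exact RingConGen.Rel.refl _
  | symm _ ih => exact RingConGen.Rel.symm ih
  | trans _ _ ih1 ih2 => exact RingConGen.Rel.trans ih1 ih2
  | add _ _ ih1 ih2 =>
    rw [Q.mapL_add Q' σ hσX, Q.mapL_add Q' σ hσX]
    exact RingConGen.Rel.add ih1 ih2
  | mul _ _ ih1 ih2 =>
    rw [Q.mapL_mul Q' σ hσX hσact, Q.mapL_mul Q' σ hσX hσact]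
    exact RingConGen.Rel.mul ih1 ih2

end PartialAction

end Aux

/-- Equivalent partial actions (with unital domain ideals) give equivalent
partial representations `s ↦ 1_s δ_s`. -/
theorem equivalent_actions_equivalent_reps
    {S : Type*} [Monoid S] [StarMul S]
    (hinv : ∀ s : S, s * star s * s = s)
    (hcomm : ∀ s t : S, (s * star s) * (t * star t) = (t * star t) * (s * star s))
    {A : Type*} [NonUnitalRing A] {A' : Type*} [NonUnitalRing A']
    (P : PartialAction S A) (P' : PartialAction S A')
    (one : S → A) (hmem : ∀ s, one s ∈ P.X s)
    (hl : ∀ s, ∀ a ∈ P.X s, one s * a = a)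
    (hr : ∀ s, ∀ a ∈ P.X s, a * one s = a)
    (one' : S → A') (hmem' : ∀ s, one' s ∈ P'.X s)
    (hl' : ∀ s, ∀ a ∈ P'.X s, one' s * a = a)
    (hr' : ∀ s, ∀ a ∈ P'.X s, a * one' s = a)
    (θ : A ≃+* A')
    (hθX : ∀ s, θ '' P.X s = P'.X s)
    (hθact : ∀ s, ∀ a ∈ P.X (star s), θ (P.act s a) = P'.act s (θ a)) :
    ∃ φ : P.CP → P'.CP, Function.Bijective φ ∧
      (∀ x y, φ (x + y) = φ x + φ y) ∧
      (∀ x y, φ (x * y) = φ x * φ y) ∧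
      (∀ s : S, φ (P.rep one hmem s) = P'.rep one' hmem' s) := by
  classical
  have hθX' : ∀ s, ⇑θ.symm '' P'.X s = P.X s := by
    intro s
    rw [← hθX s, Set.image_image]
    simp
  have hθact' : ∀ s, ∀ a' ∈ P'.X (star s), θ.symm (P'.act s a') = P.act s (θ.symm a') := by
    intro s a' ha'
    have hm : θ.symm a' ∈ P.X (star s) := by rw [← hθX' (star s)]; exact ⟨a', ha', rfl⟩
    have h := hθact s _ hm
    rw [θ.apply_symm_apply] at h
    rw [← h, θ.symm_apply_apply]
  let φ : P.CP → P'.CP := Quotient.lift (fun x => P'.toCP (P.mapL P' θ hθX x))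
    (fun x y h => ((ringConGen P'.crel).eq).mpr (PartialAction.mapL_rel P P' θ hθX hθact x y h))
  let ψ : P'.CP → P.CP := Quotient.lift (fun x => P.toCP (P'.mapL P θ.symm hθX' x))
    (fun x y h => ((ringConGen P.crel).eq).mpr (PartialAction.mapL_rel P' P θ.symm hθX' hθact' x y h))
  have hψφ : ∀ q, ψ (φ q) = q := by
    refine Quotient.ind fun x => ?_
    show P.toCP (P'.mapL P θ.symm hθX' (P.mapL P' θ hθX x)) = P.toCP x
    congr 1
    apply Subtype.ext
    ext u
    show θ.symm (θ (x.1 u)) = x.1 u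
    exact θ.symm_apply_apply _
  have hφψ : ∀ q, φ (ψ q) = q := by
    refine Quotient.ind fun x => ?_
    show P'.toCP (P.mapL P' θ hθX (P'.mapL P θ.symm hθX' x)) = P'.toCP x
    congr 1
    apply Subtype.ext
    ext u
    show θ (θ.symm (x.1 u)) = x.1 u
    exact θ.apply_symm_apply _
  have hone : ∀ s, θ (one s) = one' s := by
    intro s
    have h1 : θ (one s) ∈ P'.X s := by rw [← hθX s]; exact ⟨_, hmem s, rfl⟩
    have h5 : θ.symm (one' s) ∈ P.X s := by rw [← hθX' s]; exact ⟨_, hmem' s, rfl⟩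
    have h2 : one' s * θ (one s) = one' s := by
      have h3 := hr s _ h5
      calc one' s * θ (one s) = θ (θ.symm (one' s) * one s) := by
            rw [map_mul, θ.apply_symm_apply]
        _ = one' s := by rw [h3, θ.apply_symm_apply]
    have h4 := hl' s _ h1
    exact h4.symm.trans h2
  refine ⟨φ, Function.bijective_iff_has_inverse.mpr ⟨ψ, hψφ, hφψ⟩, ?_, ?_, ?_⟩
  · refine Quotient.ind₂ fun x y => ?_
    show P'.toCP (P.mapL P' θ hθX (x + y)) = _
    rw [P.mapL_add P' θ hθX]
    rfl
  · refine Quotient.ind₂ fun x y => ?_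
    show P'.toCP (P.mapL P' θ hθX (x * y)) = _
    rw [P.mapL_mul P' θ hθX hθact]
    rfl
  · intro s
    show P'.toCP (P.mapL P' θ hθX (P.del s (one s) (hmem s))) = P'.rep one' hmem' s
    rw [P.mapL_del P' θ hθX]
    exact congrArg P'.toCP (Subtype.ext (congrArg (Finsupp.single s) (hone s)))
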